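/- Let Γ be a simple graph on a finite vertex set V, let s, t ∈ V be distinct vertices not adjacent in Γ, and let Γ ∪ e be Γ with the edge e = (s, t) added. Every maximal clique of Γ ∪ e is either a maximal clique of Γ, or of the form (ℓ_s ∩ ℓ_t) ∪ {s, t} for some maximal cliques ℓ_s and ℓ_t of Γ with s ∈ ℓ_s and t ∈ ℓ_t. -/

import Mathlib

/-- A maximal clique of a simple graph: a clique not properly contained in any other clique. -/
def IsMaxClique {V : Type*} (G : SimpleGraph V) (c : Set V) : Prop :=
  G.IsClique c ∧ ∀ d : Set V, G.IsClique d → c ⊆ d → c = d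

/-! Unless `s ≠ t` both lie in `ℓ`, the clique `ℓ` is already a clique of `Γ`, hence maximal there.
Otherwise `ℓ \ {t}` and `ℓ \ {s}` are cliques of `Γ`; extend them to maximal cliques
`ℓs ∋ s` and `ℓt ∋ t`. Then `ℓ ⊆ (ℓs ∩ ℓt) ∪ {s, t}`, and the right-hand side is a clique of
`Γ ∪ e`, so maximality of `ℓ` forces equality. -/

section IsMaxClique

variable {V : Type*} {G H : SimpleGraph V} {c : Set V}

lemma isMaxClique_iff_maximal : IsMaxClique G c ↔ Maximal G.IsClique c :=
  and_congr_right fun _ ↦ forall_congr' fun _ ↦ forall_congr' fun _ ↦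
    ⟨fun h hcd ↦ (h hcd).ge, fun h hcd ↦ hcd.antisymm (h hcd)⟩

lemma exists_isMaxClique_superset [Finite V] (hc : G.IsClique c) :
    ∃ m, IsMaxClique G m ∧ c ⊆ m := by
  obtain ⟨m, hcm, hm⟩ := Finite.exists_le_maximal hc
  exact ⟨m, isMaxClique_iff_maximal.2 hm, hcm⟩

lemma IsMaxClique.of_le (hGH : G ≤ H) (hc : IsMaxClique H c) (hG : G.IsClique c) :
    IsMaxClique G c :=
  ⟨hG, fun d hd ↦ hc.2 d (hd.mono hGH)⟩

end IsMaxClique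

namespace SimpleGraph

variable {V : Type*} {G : SimpleGraph V} {s t : V} {c : Set V}

lemma IsClique.of_sup_edge (hc : (G ⊔ edge s t).IsClique c) (h : s ∈ c → t ∈ c → s = t) :
    G.IsClique c := by
  intro x hx y hy hxy
  have := hc hx hy hxy
  simp only [sup_adj, edge_adj] at this
  grind

lemma isClique_sup_edge_inter_union {a b : Set V} (hst : s ≠ t) (ha : G.IsClique a)
    (hb : G.IsClique b) (hs : s ∈ a) (ht : t ∈ b) :
    (G ⊔ edge s t).IsClique (a ∩ b ∪ {s, t}) :=
  isClique_sup_edge_of_ne_sdiff hst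
    (hb.subset fun x ⟨hx, hxs⟩ ↦ by grind)
    (ha.subset fun x ⟨hx, hxt⟩ ↦ by grind)

end SimpleGraph

theorem statement_5_general {V : Type*} [Fintype V] (Γ : SimpleGraph V) (s t : V) (ℓ : Set V)
    (hmax : IsMaxClique (Γ ⊔ SimpleGraph.edge s t) ℓ) :
    IsMaxClique Γ ℓ ∨
      ∃ ℓs ℓt : Set V, IsMaxClique Γ ℓs ∧ IsMaxClique Γ ℓt ∧ s ∈ ℓs ∧ t ∈ ℓt ∧
        ℓ = (ℓs ∩ ℓt) ∪ {s, t} := by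
  by_cases hboth : s ≠ t ∧ s ∈ ℓ ∧ t ∈ ℓ
  · obtain ⟨hst, hsℓ, htℓ⟩ := hboth
    obtain ⟨ℓs, hℓs, hsubs⟩ :=
      exists_isMaxClique_superset (SimpleGraph.edge_comm s t ▸ hmax.1).sdiff_of_sup_edge
    obtain ⟨ℓt, hℓt, hsubt⟩ := exists_isMaxClique_superset hmax.1.sdiff_of_sup_edge
    have hs : s ∈ ℓs := hsubs ⟨hsℓ, hst⟩
    have ht : t ∈ ℓt := hsubt ⟨htℓ, hst.symm⟩
    have hsub : ℓ ⊆ (ℓs ∩ ℓt) ∪ {s, t} := fun x hx ↦ by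
      by_cases hxs : x = s
      · simp [hxs]
      by_cases hxt : x = t
      · simp [hxt]
      exact .inl ⟨hsubs ⟨hx, hxt⟩, hsubt ⟨hx, hxs⟩⟩
    exact .inr ⟨ℓs, ℓt, hℓs, hℓt, hs, ht,
      hmax.2 _ (SimpleGraph.isClique_sup_edge_inter_union hst hℓs.1 hℓt.1 hs ht) hsub⟩
  · exact .inl (hmax.of_le le_sup_left (hmax.1.of_sup_edge fun hs ht ↦ by tauto))

/-- Every maximal clique of `Γ ∪ e` is either a maximal clique of `Γ`, or of
the form `(ℓs ∩ ℓt) ∪ {s, t}` for maximal cliques `ℓs`, `ℓt` of `Γ` with `s ∈ ℓs`, `t ∈ ℓt`. -/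
theorem statement_5 {V : Type*} [Fintype V] (Γ : SimpleGraph V) (s t : V) (hst : s ≠ t)
    (hadj : ¬ Γ.Adj s t) (ℓ : Set V)
    (hmax : IsMaxClique (Γ ⊔ SimpleGraph.edge s t) ℓ) :
    IsMaxClique Γ ℓ ∨
      ∃ ℓs ℓt : Set V, IsMaxClique Γ ℓs ∧ IsMaxClique Γ ℓt ∧ s ∈ ℓs ∧ t ∈ ℓt ∧
        ℓ = (ℓs ∩ ℓt) ∪ {s, t} :=
  statement_5_general Γ s t ℓ hmax
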